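/- Let d be a square-free integer with d ≡ 1 (mod 8) and d ≠ 1, let k = ℚ(√d) be the real quadratic field obtained by adjoining √d to ℚ inside ℝ, and let α = 7 + 8m(m+1) for some integer m ≥ 0. Then α is not a sum of three squares in k. -/

import Mathlib

/-!
As `d ≡ 1 (mod 8)`, `d` is a square modulo every power of `2`. Write `x, y, z` as `uᵢ + vᵢ√d`
with `u, v ∈ ℚ³`; then `α = u ⬝ u + d (v ⬝ v)` and `u ⬝ v = 0` (take `v = 0` if `√d ∈ ℚ`).
Clearing a denominator `D = 2ˢE` (`E` odd) and replacing `√d` by an integer `t` with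
`t² ≡ d (mod 2^(2s+3))` gives three integers whose squares sum to `4ˢ α E²` modulo `2^(2s+3)`.
Since `α E² ≡ 7 (mod 8)`, halving them `s` times gives three squares summing to `7` modulo `8`,
which is impossible.
-/

open Matrix Polynomial IntermediateField

/-- Equivalently, `c` is a square in `ℤ₂`. -/
def IsSquareModTwoPow (c : ℤ) : Prop :=
  ∀ n : ℕ, ∃ t : ℤ, t ^ 2 ≡ c [ZMOD 2 ^ n]

theorem isSquareModTwoPow_of_emod_eight_eq_one {d : ℤ} (hd : d % 8 = 1) :
    IsSquareModTwoPow d := by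
  suffices h : ∀ n : ℕ, ∃ t : ℤ, Odd t ∧ t ^ 2 ≡ d [ZMOD 2 ^ (n + 3)] by
    intro n
    obtain ⟨t, -, ht⟩ := h n
    exact ⟨t, ht.of_dvd (pow_dvd_pow 2 (by omega))⟩
  intro n
  induction n with
  | zero => exact ⟨1, odd_one, Int.modEq_iff_dvd.mpr (by omega)⟩
  | succ n ih =>
    obtain ⟨t, ⟨a, rfl⟩, hdt⟩ := ih
    obtain ⟨u, hu⟩ := Int.modEq_iff_dvd.mp hdt
    rcases Int.even_or_odd' u with ⟨v, rfl | rfl⟩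
    · exact ⟨2 * a + 1, odd_two_mul_add_one a,
        Int.modEq_iff_dvd.mpr ⟨v, by linear_combination hu⟩⟩
    -- replacing `t` by `t + 2 ^ (n + 2)` changes `t ^ 2` by `2 ^ (n + 3)` modulo `2 ^ (n + 4)`
    · exact ⟨2 * (a + 2 ^ (n + 1)) + 1, odd_two_mul_add_one _,
        Int.modEq_iff_dvd.mpr ⟨v - a - 2 ^ n, by linear_combination hu⟩⟩

theorem Int.sq_modEq_one_of_odd {n : ℤ} (hn : Odd n) : n ^ 2 ≡ 1 [ZMOD 8] := by
  obtain ⟨j, rfl⟩ := hn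
  obtain ⟨i, hi⟩ := Int.even_mul_succ_self j
  exact Int.modEq_iff_dvd.mpr ⟨-i, by linear_combination (-4 : ℤ) * hi⟩

theorem even_of_four_dvd_sq_add_sq_add_sq {a b c : ℤ} (h : 4 ∣ a ^ 2 + b ^ 2 + c ^ 2) :
    Even a ∧ Even b ∧ Even c := by
  have key (x : ℤ) : Even x ∧ 4 ∣ x ^ 2 ∨ x ^ 2 % 4 = 1 :=
    (Int.even_or_odd x).imp
      (fun hx => ⟨hx, by simpa [sq] using mul_dvd_mul hx.two_dvd hx.two_dvd⟩)
      Int.sq_mod_four_eq_one_of_odd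
  rcases key a with ha | ha <;> rcases key b with hb | hb <;> rcases key c with hc | hc <;>
    first | exact ⟨ha.1, hb.1, hc.1⟩ | omega

theorem sq_add_sq_add_sq_not_modEq_four_pow_mul {w : ℤ} (hw : w ≡ 7 [ZMOD 8]) (s : ℕ)
    (a b c : ℤ) : ¬ a ^ 2 + b ^ 2 + c ^ 2 ≡ 4 ^ s * w [ZMOD 2 ^ (2 * s + 3)] := by
  induction s generalizing a b c with
  | zero =>
    intro h
    have h8 : ((a ^ 2 + b ^ 2 + c ^ 2 : ℤ) : ZMod 8) = ((7 : ℤ) : ZMod 8) :=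
      (ZMod.intCast_eq_intCast_iff _ _ 8).mpr ((by simpa using h : _ ≡ w [ZMOD 8]).trans hw)
    push_cast at h8
    have : ∀ x y z : ZMod 8, x ^ 2 + y ^ 2 + z ^ 2 ≠ 7 := by decide
    exact this _ _ _ h8
  | succ s ih =>
    intro h
    have h4 : 4 ∣ a ^ 2 + b ^ 2 + c ^ 2 := by
      refine Int.modEq_zero_iff_dvd.mp ((h.of_dvd ⟨2 ^ (2 * s + 3), by ring⟩).trans ?_)
      exact Int.modEq_zero_iff_dvd.mpr ⟨4 ^ s * w, by ring⟩
    obtain ⟨⟨a, rfl⟩, ⟨b, rfl⟩, ⟨c, rfl⟩⟩ := even_of_four_dvd_sq_add_sq_add_sq h4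
    refine ih a b c (Int.ModEq.mul_left_cancel' (c := 4) four_ne_zero ?_)
    convert h using 1 <;> ring

theorem Int.dotProduct_add_mul_dotProduct_ne_mul_sq {c w D : ℤ} (hc : IsSquareModTwoPow c)
    (hw : w ≡ 7 [ZMOD 8]) (hD : D ≠ 0) {a b : Fin 3 → ℤ} (hab : a ⬝ᵥ b = 0) :
    a ⬝ᵥ a + c * (b ⬝ᵥ b) ≠ w * D ^ 2 := by
  intro h
  obtain ⟨s, E, hE, hDE⟩ := Nat.exists_eq_two_pow_mul_odd (Int.natAbs_ne_zero.mpr hD)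
  obtain ⟨t, ht⟩ := hc (2 * s + 3)
  set e := a + t • b
  have he : e ⬝ᵥ e = a ⬝ᵥ a + t ^ 2 * (b ⬝ᵥ b) := by
    simp only [e, add_dotProduct, dotProduct_add, smul_dotProduct, dotProduct_smul,
      dotProduct_comm b a, hab, smul_eq_mul]
    ring
  refine sq_add_sq_add_sq_not_modEq_four_pow_mul (hw.mul (Int.sq_modEq_one_of_odd hE.natCast)) s
    (e 0) (e 1) (e 2) ?_
  calc e 0 ^ 2 + e 1 ^ 2 + e 2 ^ 2 = a ⬝ᵥ a + t ^ 2 * (b ⬝ᵥ b) := by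
        rw [← he]
        simp [dotProduct, Fin.sum_univ_three, sq]
    _ ≡ a ⬝ᵥ a + c * (b ⬝ᵥ b) [ZMOD 2 ^ (2 * s + 3)] := (ht.mul_right _).add_left _
    _ = 4 ^ s * (w * E ^ 2) := by
      rw [h, ← Int.natAbs_sq D, hDE, show (4 : ℤ) = 2 ^ 2 by norm_num, ← pow_mul]
      push_cast
      ring

theorem Rat.dotProduct_add_mul_dotProduct_ne {c w : ℤ} (hc : IsSquareModTwoPow c)
    (hw : w ≡ 7 [ZMOD 8]) {u v : Fin 3 → ℚ} (huv : u ⬝ᵥ v = 0) :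
    u ⬝ᵥ u + c * (v ⬝ᵥ v) ≠ w := by
  obtain ⟨⟨D, hD⟩, hint⟩ :=
    IsLocalization.exist_integer_multiples_of_finite (nonZeroDivisors ℤ) (Sum.elim u v)
  choose a ha using fun i => hint (Sum.inl i)
  choose b hb using fun i => hint (Sum.inr i)
  have ha' : Int.castRingHom ℚ ∘ a = (D : ℚ) • u := funext fun i => by simpa using ha i
  have hb' : Int.castRingHom ℚ ∘ b = (D : ℚ) • v := funext fun i => by simpa using hb i
  have hcast (x y : Fin 3 → ℤ) :
      ((x ⬝ᵥ y : ℤ) : ℚ) = (Int.castRingHom ℚ ∘ x) ⬝ᵥ (Int.castRingHom ℚ ∘ y) :=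
    (Int.castRingHom ℚ).map_dotProduct x y
  intro h
  refine Int.dotProduct_add_mul_dotProduct_ne_mul_sq hc hw (nonZeroDivisors.ne_zero hD)
    (a := a) (b := b) ?_ ?_
  · have : ((a ⬝ᵥ b : ℤ) : ℚ) = 0 := by
      rw [hcast, ha', hb', smul_dotProduct, dotProduct_smul, huv, smul_zero, smul_zero]
    exact_mod_cast this
  · have : ((a ⬝ᵥ a + c * (b ⬝ᵥ b) : ℤ) : ℚ) = ((w * D ^ 2 : ℤ) : ℚ) := by
      push_cast
      rw [hcast, hcast, ha', hb']
      simp only [smul_dotProduct, dotProduct_smul, smul_eq_mul]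
      linear_combination (D : ℚ) ^ 2 * h
    exact_mod_cast this

theorem exists_eq_add_mul_of_mem_adjoin_of_sq_eq {K L : Type*} [Field K] [Field L] [Algebra K L]
    {s : L} {c : K} (hs : s ^ 2 = algebraMap K L c) {x : L} (hx : x ∈ K⟮s⟯) :
    ∃ u v : K, x = algebraMap K L u + algebraMap K L v * s := by
  have hsalg : IsAlgebraic K s := ⟨X ^ 2 - C c, X_pow_sub_C_ne_zero two_pos c, by simp [hs]⟩
  rw [← mem_toSubalgebra, adjoin_simple_toSubalgebra_of_isAlgebraic hsalg] at hx
  induction hx using Algebra.adjoin_induction with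
  | mem y hy => exact ⟨0, 1, by simp [Set.mem_singleton_iff.mp hy]⟩
  | algebraMap r => exact ⟨r, 0, by simp⟩
  | add y z _ _ hy hz =>
    obtain ⟨u, v, rfl⟩ := hy
    obtain ⟨u', v', rfl⟩ := hz
    exact ⟨u + u', v + v', by simp only [map_add]; ring⟩
  | mul y z _ _ hy hz =>
    obtain ⟨u, v, rfl⟩ := hy
    obtain ⟨u', v', rfl⟩ := hz
    refine ⟨u * u' + c * v * v', u * v' + v * u', ?_⟩
    simp only [map_add, map_mul]
    linear_combination (algebraMap K L v * algebraMap K L v') * hs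

theorem exists_dotProduct_eq_zero_of_sum_sq_eq {ι : Type*} [Fintype ι] {s : ℝ} {c w : ℚ}
    (hs : s ^ 2 = c) (u v : ι → ℚ) (h : ∑ i, ((u i : ℝ) + v i * s) ^ 2 = w) :
    ∃ u' v' : ι → ℚ, u' ⬝ᵥ v' = 0 ∧ u' ⬝ᵥ u' + c * (v' ⬝ᵥ v') = w := by
  by_cases hirr : Irrational s
  · have hexp : ∑ i, ((u i : ℝ) + v i * s) ^ 2
        = ((u ⬝ᵥ u + c * (v ⬝ᵥ v) : ℚ) : ℝ) + s * ((2 * (u ⬝ᵥ v) : ℚ) : ℝ) := by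
      simp only [dotProduct, Rat.cast_add, Rat.cast_mul, Rat.cast_sum, Rat.cast_ofNat, ← hs,
        Finset.mul_sum, ← Finset.sum_add_distrib]
      exact Finset.sum_congr rfl fun i _ => by ring
    rw [hexp] at h
    have huv : 2 * (u ⬝ᵥ v) = 0 := by
      by_contra hne
      exact ((hirr.mul_ratCast hne).ratCast_add _).ne_rat w h
    refine ⟨u, v, by simpa using huv, ?_⟩
    rw [huv, Rat.cast_zero, mul_zero, add_zero] at h
    exact_mod_cast h
  · obtain ⟨r, rfl⟩ := not_not.mp hirr
    refine ⟨fun i => u i + v i * r, 0, dotProduct_zero _, ?_⟩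
    simpa [dotProduct, sq] using (by exact_mod_cast h : ∑ i, (u i + v i * r) ^ 2 = w)

theorem not_sum_three_squares_real_quadratic'_general
    (d : ℤ) (hd : d % 8 = 1)
    (k : IntermediateField ℚ ℝ) (hk : k = IntermediateField.adjoin ℚ {Real.sqrt d})
    (m : ℕ) (α : ℕ) (hα : α = 7 + 8 * m * (m + 1)) :
    ¬ ∃ x y z : k, (α : k) = x ^ 2 + y ^ 2 + z ^ 2 := by
  rintro ⟨x, y, z, hxyz⟩
  subst hk
  -- for `d < 0` the junk value `√d = 0` is the square root of `c = 0`
  obtain ⟨c, hc, hsq⟩ : ∃ c : ℤ, IsSquareModTwoPow c ∧ √(d : ℝ) ^ 2 = ((c : ℚ) : ℝ) := by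
    rcases le_or_gt 0 d with h | h
    · refine ⟨d, isSquareModTwoPow_of_emod_eight_eq_one hd, ?_⟩
      simpa using Real.sq_sqrt (by exact_mod_cast h : (0 : ℝ) ≤ d)
    · refine ⟨0, fun n => ⟨0, rfl⟩, ?_⟩
      simp [Real.sqrt_eq_zero_of_nonpos (by exact_mod_cast h.le : (d : ℝ) ≤ 0)]
  have hα8 : (α : ℤ) ≡ 7 [ZMOD 8] :=
    Int.modEq_iff_dvd.mpr ⟨-(m * (m + 1)), by rw [hα]; push_cast; ring⟩
  choose u v huv using fun i => exists_eq_add_mul_of_mem_adjoin_of_sq_eq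
    (hsq.trans (eq_ratCast (algebraMap ℚ ℝ) _).symm) (![x, y, z] i).2
  have hsum : ∑ i, ((u i : ℝ) + v i * √(d : ℝ)) ^ 2 = ((α : ℤ) : ℚ) := by
    simp only [eq_ratCast] at huv
    simp only [Fin.sum_univ_three, ← huv]
    exact_mod_cast (congrArg Subtype.val hxyz).symm
  obtain ⟨u', v', h0, hw⟩ := exists_dotProduct_eq_zero_of_sum_sq_eq hsq u v hsum
  exact Rat.dotProduct_add_mul_dotProduct_ne hc hα8 h0 hw

/-- If `d ≡ 1 (mod 8)` is a square-free integer, `d ≠ 1`, and `α = 7 + 8m(m+1)` with `m ≥ 0`,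
then `α` is not a sum of three squares in the real quadratic field `k = ℚ(√d)`. -/
theorem not_sum_three_squares_real_quadratic'
    (d : ℤ) (hsf : Squarefree d) (hd : d % 8 = 1) (hd1 : d ≠ 1)
    (k : IntermediateField ℚ ℝ) (hk : k = IntermediateField.adjoin ℚ {Real.sqrt d})
    (m : ℕ) (α : ℕ) (hα : α = 7 + 8 * m * (m + 1)) :
    ¬ ∃ x y z : k, (α : k) = x ^ 2 + y ^ 2 + z ^ 2 :=
  not_sum_three_squares_real_quadratic'_general d hd k hk m α hα
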